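/- Gluing lemma for partition-type maps: suppose given γ : [c] → 2^[c'], β : [b] → 2^[b'], both partition-type, and cofibration-type maps φ : [a] → 2^[b], ψ : [a'] → 2^[b'] (induced by injections), with α : [a] → 2^[a'] such that β ∘ φ = ψ ∘ α. Then the map μ : [c] ⊔ ([b] \ im φ) → 2^{[c'] ⊔ ([b'] \ im ψ)} given by μ(i) = γ(i) for i ∈ [c] and μ(j) = β(j) for j ∈ [b] \ im φ is partition-type, i.e., its values are pairwise disjoint and cover [c'] ⊔ ([b'] \ im ψ). (Here one uses that α is partition-type as well.) -/

import Mathlib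

open Classical in
/-- Composition of set-valued functions: `(ψφ)(x) = ⋃_{y ∈ φ(x)} ψ(y)`. -/
noncomputable def scomp {α β γ : Type*} (ψ : β → Finset γ) (φ : α → Finset β) :
    α → Finset γ :=
  fun x => (φ x).biUnion ψ

/-- Partition-type: values pairwise disjoint and covering the codomain. -/
def PartitionTypeG {α β : Type*} (φ : α → Finset β) : Prop :=
  (∀ x y, x ≠ y → Disjoint (φ x) (φ y)) ∧ ∀ z, ∃ x, z ∈ φ x

open Classical in
/-- The gluing map `μ : [c] ⊔ ([b] \ im φ) → 2^{[c'] ⊔ ([b'] \ im ψ)}`,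
given by `γ` on `[c]` and by (the corestriction of) `β` on `[b] \ im φ`. -/
noncomputable def glueμ {a a' b b' c c' : ℕ} (u : Fin a → Fin b) (u' : Fin a' → Fin b')
    (γ : Fin c → Finset (Fin c')) (β : Fin b → Finset (Fin b')) :
    (Fin c ⊕ {j : Fin b // ¬ ∃ i, u i = j}) →
      Finset (Fin c' ⊕ {j' : Fin b' // ¬ ∃ i', u' i' = j'})
  | Sum.inl i => (γ i).image Sum.inl
  | Sum.inr j => ((β j.1).subtype (fun y => ¬ ∃ i', u' i' = y)).image Sum.inr

/-!
`μ` is the disjoint sum of `γ` and a restriction of `β`: to the blocks outside `im φ` and the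
points outside `im ψ`. That restriction is still a partition because the square
`β ∘ φ = ψ ∘ α` puts every block `β (φ i)` inside `im ψ`, so a point outside `im ψ` can only lie
in a block outside `im φ`.
-/

namespace PartitionTypeG

variable {ι κ α β : Type*}

theorem sumElim_image [DecidableEq (α ⊕ β)] {f : ι → Finset α} {g : κ → Finset β}
    (hf : PartitionTypeG f) (hg : PartitionTypeG g) :
    PartitionTypeG (Sum.elim (fun i => (f i).image Sum.inl) (fun k => (g k).image Sum.inr)) := by
  refine ⟨?_, ?_⟩
  · rintro (i | k) (j | l) hne
    · exact (Finset.disjoint_image Sum.inl_injective).2 (hf.1 i j (ne_of_apply_ne _ hne))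
    · simp [Finset.disjoint_left]
    · simp [Finset.disjoint_left]
    · exact (Finset.disjoint_image Sum.inr_injective).2 (hg.1 k l (ne_of_apply_ne _ hne))
  · rintro (z | z)
    · obtain ⟨i, hi⟩ := hf.2 z
      exact ⟨.inl i, Finset.mem_image_of_mem _ hi⟩
    · obtain ⟨k, hk⟩ := hg.2 z
      exact ⟨.inr k, Finset.mem_image_of_mem _ hk⟩

theorem subtype {f : ι → Finset α} (hf : PartitionTypeG f) {p : ι → Prop} {q : α → Prop}
    [DecidablePred q] (hpq : ∀ i z, z ∈ f i → q z → p i) :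
    PartitionTypeG fun i : Subtype p => (f i).subtype q := by
  refine ⟨fun i j hne => Finset.disjoint_left.2 fun z hi hj => ?_, fun z => ?_⟩
  · rw [Finset.mem_subtype] at hi hj
    exact Finset.disjoint_left.1 (hf.1 i j (Subtype.coe_injective.ne hne)) hi hj
  · obtain ⟨i, hi⟩ := hf.2 z
    exact ⟨⟨i, hpq i z hi z.2⟩, Finset.mem_subtype.2 hi⟩

end PartitionTypeG

theorem mem_scomp_singleton_left_iff {ι ι' κ : Type*} {u : ι' → κ} {α : ι → Finset ι'} {i : ι}
    {z : κ} :
    z ∈ scomp (fun i' => {u i'}) α i ↔ ∃ i' ∈ α i, u i' = z := by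
  simp [scomp, eq_comm]

theorem scomp_singleton_right {ι κ ν : Type*} (β : κ → Finset ν) (u : ι → κ) :
    scomp β (fun i => {u i}) = fun i => β (u i) := by
  funext i; simp [scomp]

theorem glue_partitionType_general {a a' b b' c c' : ℕ}
    (u : Fin a → Fin b) (u' : Fin a' → Fin b')
    (γ : Fin c → Finset (Fin c')) (β : Fin b → Finset (Fin b'))
    (α : Fin a → Finset (Fin a'))
    (hγ : PartitionTypeG γ) (hβ : PartitionTypeG β)
    (hsquare : scomp β (fun i => {u i}) = scomp (fun i' => ({u' i'} : Finset (Fin b'))) α) :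
    PartitionTypeG (glueμ u u' γ β) := by
  have hβ_mem_range (i : Fin a) (z : Fin b') (hz : z ∈ β (u i)) : ∃ i', u' i' = z := by
    rw [← congrFun (scomp_singleton_right β u) i, hsquare, mem_scomp_singleton_left_iff] at hz
    obtain ⟨i', -, hi'⟩ := hz
    exact ⟨i', hi'⟩
  have hrestrict := hβ.subtype (p := fun j => ¬ ∃ i, u i = j) (q := fun z => ¬ ∃ i', u' i' = z)
    fun j z hz hz' ⟨i, hi⟩ => hz' (hβ_mem_range i z (hi ▸ hz))
  convert hγ.sumElim_image hrestrict using 1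
  funext x
  cases x <;> rfl

/-- gluing lemma for partition-type maps.  Given partition-type
`γ : [c] → 2^[c']` and `β : [b] → 2^[b']`, cofibration-type maps induced by injections
`u : [a] ↪ [b]` and `u' : [a'] ↪ [b']`, and a partition-type `α : [a] → 2^[a']` with
`β ∘ φ = ψ ∘ α`, the induced map `μ` on the pushout indexing sets is partition-type,
i.e. its values are pairwise disjoint and cover `[c'] ⊔ ([b'] \ im ψ)`. -/
theorem glue_partitionType {a a' b b' c c' : ℕ}
    (u : Fin a → Fin b) (u' : Fin a' → Fin b')
    (hu : Function.Injective u) (hu' : Function.Injective u')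
    (γ : Fin c → Finset (Fin c')) (β : Fin b → Finset (Fin b'))
    (α : Fin a → Finset (Fin a'))
    (hγ : PartitionTypeG γ) (hβ : PartitionTypeG β) (hα : PartitionTypeG α)
    (hsquare : scomp β (fun i => {u i}) = scomp (fun i' => ({u' i'} : Finset (Fin b'))) α) :
    PartitionTypeG (glueμ u u' γ β) :=
  glue_partitionType_general u u' γ β α hγ hβ hsquare
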